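/- arXiv:2409.03908 — 2 statements merged into one kernel-verified Lean document; each statement's English description precedes it below -/
import Mathlib

section
/- For every real ε with 0 < ε < e⁻², one has ∫_{A(ε,1)} (1 − log(‖x‖)/log(ε))² dx ≥ π/2, where the integral is with respect to Lebesgue measure on ℝ². -/
/-!
In polar coordinates the integral equals `2π ∫_ε^1 r (1 - log r / log ε)² dr`, which evaluates
to `2π (1/2 + 1/(2 log ε) + (1 - ε²)/(4 log² ε))`; since `log ε < -2`, the middle term is at
least `-1/4` and the last one is nonnegative.
-/

open MeasureTheory Real

open Set Metric in
theorem MeasureTheory.integral_annulus_fun_norm_addHaar {E F : Type*} [NormedAddCommGroup E]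
    [NormedSpace ℝ E] [MeasurableSpace E] [NormedAddCommGroup F] [NormedSpace ℝ F] [Nontrivial E]
    (μ : Measure E) [FiniteDimensional ℝ E] [BorelSpace E] [μ.IsAddHaarMeasure]
    {a b : ℝ} (ha : 0 ≤ a) (f : ℝ → F) :
    ∫ x in {x : E | a < ‖x‖ ∧ ‖x‖ < b}, f ‖x‖ ∂μ =
      Module.finrank ℝ E • μ.real (ball 0 1) •
        ∫ y in Ioo a b, y ^ (Module.finrank ℝ E - 1) • f y := by
  have hannulus : {x : E | a < ‖x‖ ∧ ‖x‖ < b} = (‖·‖) ⁻¹' Ioo a b := rfl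
  have hradial : ∀ y : ℝ, y ^ (Module.finrank ℝ E - 1) • (Ioo a b).indicator f y =
      (Ioo a b).indicator (fun y ↦ y ^ (Module.finrank ℝ E - 1) • f y) y :=
    fun y ↦ ((Ioo a b).indicator_const_smul_apply _ f y).symm
  rw [hannulus, ← integral_indicator (measurableSet_Ioo.preimage continuous_norm.measurable),
    show ((‖·‖) ⁻¹' Ioo a b).indicator (fun x : E ↦ f ‖x‖) = fun x ↦ (Ioo a b).indicator f ‖x‖
      from funext fun x ↦ indicator_comp_right (‖·‖),
    integral_fun_norm_addHaar μ ((Ioo a b).indicator f)]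
  simp_rw [hradial]
  rw [integral_indicator measurableSet_Ioo, Measure.restrict_restrict measurableSet_Ioo,
    Ioo_inter_Ioi, max_eq_left ha]

theorem hasDerivAt_primitive_mul_one_sub_log_div_sq {c r : ℝ} (hc : c ≠ 0) (hr : r ≠ 0) :
    HasDerivAt
      (fun r ↦ r ^ 2 * ((1 - log r / c) ^ 2 / 2 + (1 - log r / c) / (2 * c) + 1 / (4 * c ^ 2)))
      (r * (1 - log r / c) ^ 2) r := by
  have hu : HasDerivAt (fun r ↦ 1 - log r / c) (-(r⁻¹ / c)) r :=
    ((hasDerivAt_log hr).div_const c).const_sub 1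
  refine ((hasDerivAt_pow 2 r).fun_mul
    ((((hu.fun_pow 2).div_const 2).fun_add (hu.div_const (2 * c))).add_const _)).congr_deriv ?_
  simp only [Nat.cast_ofNat, Nat.add_one_sub_one, pow_one]
  field_simp
  ring

theorem integral_mul_one_sub_log_div_sq {ε : ℝ} (hε0 : 0 < ε) (hε1 : ε ≠ 1) :
    ∫ r in ε..1, r * (1 - log r / log ε) ^ 2 =
      1 / 2 + 1 / (2 * log ε) + (1 - ε ^ 2) / (4 * log ε ^ 2) := by
  have hlog : log ε ≠ 0 := log_ne_zero_of_pos_of_ne_one hε0 hε1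
  have hpos : ∀ r ∈ Set.uIcc ε 1, r ≠ 0 := fun r hr ↦
    (lt_of_lt_of_le (lt_min hε0 one_pos) hr.1).ne'
  rw [intervalIntegral.integral_eq_sub_of_hasDerivAt
    (fun r hr ↦ hasDerivAt_primitive_mul_one_sub_log_div_sq hlog (hpos r hr))
    (ContinuousOn.intervalIntegrable (by fun_prop (disch := assumption)))]
  simp only [one_pow, log_one, zero_div, sub_zero, one_mul, div_self hlog]
  field_simp
  ring

theorem stmt_3 (ε : ℝ) (hε0 : 0 < ε) (hε : ε < Real.exp (-2)) :
    π / 2 ≤ ∫ x in {x : EuclideanSpace ℝ (Fin 2) | ε < ‖x‖ ∧ ‖x‖ < 1},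
      (1 - Real.log ‖x‖ / Real.log ε) ^ 2 := by
  have hlog : log ε < -2 := by simpa using log_lt_log hε0 hε
  have hε1 : ε < 1 := hε.trans (exp_lt_one_iff.mpr (by norm_num))
  have hball : volume.real (Metric.ball (0 : EuclideanSpace ℝ (Fin 2)) 1) = π := by
    simp [measureReal_def, pi_pos.le]
  rw [integral_annulus_fun_norm_addHaar volume hε0.le (fun r ↦ (1 - log r / log ε) ^ 2),
    finrank_euclideanSpace_fin, hball,
    ← integral_Ioc_eq_integral_Ioo, ← intervalIntegral.integral_of_le hε1.le]
  simp only [Nat.add_one_sub_one, pow_one, smul_eq_mul, nsmul_eq_mul, Nat.cast_ofNat]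
  rw [integral_mul_one_sub_log_div_sq hε0 hε1.ne]
  have hmiddle : -(1 / 4) ≤ 1 / (2 * log ε) := by
    rw [le_div_iff_of_neg (by linarith)]
    linarith
  have hlast : 0 ≤ (1 - ε ^ 2) / (4 * log ε ^ 2) := by
    have hεsq : ε ^ 2 < 1 := by nlinarith
    exact div_nonneg (by linarith) (by positivity)
  have hquarter : 1 / 4 ≤ 1 / 2 + 1 / (2 * log ε) + (1 - ε ^ 2) / (4 * log ε ^ 2) := by
    linarith
  linarith [mul_le_mul_of_nonneg_left hquarter pi_pos.le]
end

section
/- Let 0 < ε < e⁻² and define φ : ℝ² → ℝ by φ(x) = 1 − log(‖x‖)/log(ε). Then ∫_{A(ε,1)} ‖fderiv ℝ φ x‖² dx ≤ (4/log(1/ε)) · ∫_{A(ε,1)} φ(x)² dx. -/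
/-!
Both integrands are radial, so polar coordinates turn each side into a one-dimensional integral
over `(ε, 1)` against `r dr`. With `L = log (1 / ε)` the gradient has norm `1 / (L r)`, so the
Dirichlet integral is `2 |B| / L`, where `B` is the unit ball. Since `(1 - t) ^ 2 ≥ 1 - 2 t`, the
radial integral of `φ ^ 2` is at least `1 / 2 - 1 / (2 L)`, which is `≥ 1 / 4` once `L ≥ 2`.
-/

open MeasureTheory Real

open Set Metric in
theorem integral_annulus_fun_norm {E F : Type*} [NormedAddCommGroup E] [NormedSpace ℝ E]
    [Nontrivial E] [FiniteDimensional ℝ E] [MeasurableSpace E] [BorelSpace E]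
    [NormedAddCommGroup F] [NormedSpace ℝ F] (μ : Measure E) [μ.IsAddHaarMeasure]
    {a b : ℝ} (ha : 0 ≤ a) (f : ℝ → F) :
    ∫ x in {x : E | a < ‖x‖ ∧ ‖x‖ < b}, f ‖x‖ ∂μ =
      Module.finrank ℝ E • μ.real (ball 0 1) •
        ∫ y in Ioo a b, y ^ (Module.finrank ℝ E - 1) • f y := by
  have hpre : {x : E | a < ‖x‖ ∧ ‖x‖ < b} = (‖·‖) ⁻¹' Ioo a b := rfl
  have hIoo : Ioi 0 ∩ Ioo a b = Ioo a b := inter_eq_right.2 fun y hy ↦ ha.trans_lt hy.1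
  rw [hpre, ← integral_indicator (measurable_norm measurableSet_Ioo)]
  have hind : ((‖·‖) ⁻¹' Ioo a b).indicator (fun x : E ↦ f ‖x‖) =
      fun x ↦ (Ioo a b).indicator f ‖x‖ :=
    funext fun x ↦ indicator_comp_right (g := f) (s := Ioo a b) (‖·‖)
  rw [hind, integral_fun_norm_addHaar μ]
  have hsmul : ∀ y : ℝ, y ^ (Module.finrank ℝ E - 1) • (Ioo a b).indicator f y =
      (Ioo a b).indicator (fun y ↦ y ^ (Module.finrank ℝ E - 1) • f y) y :=
    fun y ↦ (indicator_smul_apply _ (· ^ (Module.finrank ℝ E - 1)) f y).symm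
  simp_rw [hsmul]
  rw [setIntegral_indicator measurableSet_Ioo, hIoo]

theorem norm_fderiv_log_norm {E : Type*} [NormedAddCommGroup E] [InnerProductSpace ℝ E]
    {x : E} (hx : x ≠ 0) : ‖fderiv ℝ (fun y ↦ log ‖y‖) x‖ = ‖x‖⁻¹ := by
  have : Nontrivial E := ⟨⟨x, 0, hx⟩⟩
  have hnorm : DifferentiableAt ℝ (‖·‖) x :=
    (contDiffAt_norm ℝ hx).differentiableAt one_ne_zero
  have hlog := (hasDerivAt_log (norm_ne_zero_iff.2 hx)).comp_hasFDerivAt x hnorm.hasFDerivAt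
  rw [show (fun y : E ↦ log ‖y‖) = log ∘ (‖·‖) from rfl, hlog.fderiv, norm_smul,
    norm_fderiv_norm hnorm, mul_one, norm_inv, norm_norm]

theorem norm_fderiv_const_sub_log_norm_div {E : Type*} [NormedAddCommGroup E]
    [InnerProductSpace ℝ E] (a c : ℝ) {x : E} (hx : x ≠ 0) :
    ‖fderiv ℝ (fun y ↦ a - log ‖y‖ / c) x‖ = |c|⁻¹ / ‖x‖ := by
  have hdiff : DifferentiableAt ℝ (fun y : E ↦ log ‖y‖) x :=
    ((contDiffAt_norm ℝ hx).differentiableAt one_ne_zero).log (norm_ne_zero_iff.2 hx)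
  simp_rw [fderiv_const_sub, norm_neg, div_eq_mul_inv, fderiv_mul_const hdiff, norm_smul,
    norm_fderiv_log_norm hx, norm_inv, Real.norm_eq_abs]

theorem integral_mul_div_sq {a b : ℝ} (ha : 0 < a) (hab : a ≤ b) (c : ℝ) :
    ∫ y in Set.Ioo a b, y * (c / y) ^ 2 = c ^ 2 * log (b / a) := by
  rw [← integral_Ioc_eq_integral_Ioo, ← intervalIntegral.integral_of_le hab,
    ← integral_inv_of_pos ha (ha.trans_le hab), ← intervalIntegral.integral_const_mul]
  refine intervalIntegral.integral_congr fun y hy ↦ ?_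
  rw [Set.uIcc_of_le hab] at hy
  have : y ≠ 0 := (ha.trans_le hy.1).ne'
  field_simp

theorem integral_mul_log {a b : ℝ} (ha : 0 < a) (hb : 0 < b) :
    ∫ y in a..b, y * log y = b ^ 2 / 2 * log b - b ^ 2 / 4 - (a ^ 2 / 2 * log a - a ^ 2 / 4) := by
  have hne : ∀ y ∈ Set.uIcc a b, y ≠ 0 := fun y hy ↦ ((lt_min ha hb).trans_le hy.1).ne'
  have hderiv : ∀ y ∈ Set.uIcc a b,
      HasDerivAt (fun y ↦ y ^ 2 / 2 * log y - y ^ 2 / 4) (y * log y) y := by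
    intro y hy
    have hsq (c : ℝ) : HasDerivAt (fun y : ℝ ↦ y ^ 2 / c) (2 * y / c) y := by
      simpa using (hasDerivAt_pow 2 y).div_const c
    refine (((hsq 2).mul (hasDerivAt_log (hne y hy))).sub (hsq 4)).congr_deriv ?_
    field_simp [hne y hy]
    ring
  exact intervalIntegral.integral_eq_sub_of_hasDerivAt hderiv
    (continuousOn_id.mul (continuousOn_log.mono hne)).intervalIntegrable

theorem quarter_le_integral_mul_one_sub_log_div_sq {ε : ℝ} (hε0 : 0 < ε) (hε1 : ε < 1)
    (hlog : log ε ≤ -2) : 1 / 4 ≤ ∫ y in Set.Ioo ε 1, y * (1 - log y / log ε) ^ 2 := by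
  set c := log ε with hc_def
  have hc : c < 0 := by linarith
  have hne : ∀ y ∈ Set.uIcc ε 1, y ≠ 0 := fun y hy ↦
    (hε0.trans_le (Set.uIcc_of_le hε1.le ▸ hy).1).ne'
  have hint : IntervalIntegrable (fun y ↦ y * log y) volume ε 1 :=
    (continuousOn_id.mul (continuousOn_log.mono hne)).intervalIntegrable
  have hlower :
      ∫ y in ε..1, y - 2 / c * (y * log y) ≤ ∫ y in ε..1, y * (1 - log y / c) ^ 2 := by
    refine intervalIntegral.integral_mono_on hε1.le ?_ ?_ fun y hy ↦ ?_
    · exact intervalIntegral.intervalIntegrable_id.sub (hint.const_mul _)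
    · exact (continuousOn_id.mul ((continuousOn_const.sub
        ((continuousOn_log.mono hne).div_const c)).pow 2)).intervalIntegrable
    · have hy0 : 0 ≤ y := hε0.le.trans hy.1
      have : y * (1 - log y / c) ^ 2 = y - 2 / c * (y * log y) + y * (log y / c) ^ 2 := by ring
      nlinarith [mul_nonneg hy0 (sq_nonneg (log y / c))]
  have hval : ∫ y in ε..1, y - 2 / c * (y * log y) =
      1 / 2 + 1 / (2 * c) + ε ^ 2 / 2 - ε ^ 2 / (2 * c) := by
    rw [intervalIntegral.integral_sub intervalIntegral.intervalIntegrable_id (hint.const_mul _),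
      intervalIntegral.integral_const_mul, integral_id, integral_mul_log hε0 one_pos, log_one,
      ← hc_def]
    field_simp [hc.ne]
    ring
  rw [← integral_Ioc_eq_integral_Ioo, ← intervalIntegral.integral_of_le hε1.le]
  refine le_trans ?_ (hval ▸ hlower)
  have hinv : -(1 / 4) ≤ 1 / (2 * c) := by
    rw [le_div_iff_of_neg (by linarith)]; linarith
  have hε_sq : ε ^ 2 / (2 * c) ≤ 0 := div_nonpos_of_nonneg_of_nonpos (sq_nonneg ε) (by linarith)
  linarith [sq_nonneg ε]

theorem stmt_4
    (ε : ℝ) (hε0 : 0 < ε) (hε : ε < Real.exp (-2))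
    (φ : EuclideanSpace ℝ (Fin 2) → ℝ)
    (hφ : ∀ x, φ x = 1 - Real.log ‖x‖ / Real.log ε) :
    ∫ x in {x : EuclideanSpace ℝ (Fin 2) | ε < ‖x‖ ∧ ‖x‖ < 1}, ‖fderiv ℝ φ x‖ ^ 2
      ≤ (4 / Real.log (1 / ε)) *
        ∫ x in {x : EuclideanSpace ℝ (Fin 2) | ε < ‖x‖ ∧ ‖x‖ < 1}, (φ x) ^ 2 := by
  have hlog : log ε ≤ -2 := ((log_lt_iff_lt_exp hε0).2 hε).le
  have hε1 : ε < 1 := hε.trans (exp_lt_one_iff.2 (by norm_num))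
  have hL : 0 < -log ε := by linarith
  have hA : MeasurableSet {x : EuclideanSpace ℝ (Fin 2) | ε < ‖x‖ ∧ ‖x‖ < 1} :=
    measurable_norm measurableSet_Ioo
  have hgrad : ∀ x ∈ {x : EuclideanSpace ℝ (Fin 2) | ε < ‖x‖ ∧ ‖x‖ < 1},
      ‖fderiv ℝ φ x‖ ^ 2 = ((-log ε)⁻¹ / ‖x‖) ^ 2 := by
    rintro x ⟨hεx, -⟩
    rw [funext hφ, norm_fderiv_const_sub_log_norm_div 1 _ (norm_pos_iff.1 (hε0.trans hεx)),
      abs_of_neg (neg_pos.1 hL)]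
  rw [setIntegral_congr_fun hA hgrad]
  simp_rw [hφ]
  rw [integral_annulus_fun_norm volume hε0.le (fun r ↦ ((-log ε)⁻¹ / r) ^ 2),
    integral_annulus_fun_norm volume hε0.le (fun r ↦ (1 - log r / log ε) ^ 2),
    finrank_euclideanSpace_fin]
  simp only [Nat.reduceSub, pow_one, smul_eq_mul, nsmul_eq_mul, Nat.cast_ofNat]
  rw [integral_mul_div_sq hε0 hε1.le, one_div, log_inv]
  set B := volume.real (Metric.ball (0 : EuclideanSpace ℝ (Fin 2)) 1)
  have hB : 0 ≤ B := measureReal_nonneg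
  have hpot := quarter_le_integral_mul_one_sub_log_div_sq hε0 hε1 hlog
  calc _ = 4 / -log ε * (2 * (B * (1 / 4))) := by field_simp [hL.ne']
    _ ≤ _ := by gcongr
end
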